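/- Let v : ℝ → ℝ and let x be a nonzero point of three-dimensional Euclidean space, with r = ‖x‖. If v is differentiable at r, then the radial vector field F(x) = v(‖x‖) • (‖x‖⁻¹ • x) satisfies the convective-term identity (fderiv ℝ F x)(F(x)) = (v(r)·v'(r)) • (‖x‖⁻¹ • x); that is, (v·∇)v = v (∂v/∂r) e_r for a purely radial field. -/

import Mathlib

/-!
Away from the origin the field is differentiable, so its derivative in the direction of the unit
vector `e = ‖x‖⁻¹ • x` can be computed along the ray through `x`, on which
`F (x + s • e) = v (‖x‖ + s) • e`; it is therefore `v' ‖x‖ • e`. The convective term is the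
derivative in the direction `v ‖x‖ • e`, and linearity finishes the proof.
-/

open Filter Topology

variable {E : Type*} [NormedAddCommGroup E] [InnerProductSpace ℝ E]

noncomputable def radialField (v : ℝ → ℝ) (y : E) : E := v ‖y‖ • (‖y‖⁻¹ • y)

lemma radialField_smul_of_norm_eq_one (v : ℝ → ℝ) {u : E} (hu : ‖u‖ = 1) {t : ℝ} (ht : 0 < t) :
    radialField v (t • u) = v t • u := by
  have hnorm : ‖t • u‖ = t := by rw [norm_smul, hu, mul_one, Real.norm_of_nonneg ht.le]
  rw [radialField, hnorm, smul_smul t⁻¹, inv_mul_cancel₀ ht.ne', one_smul]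

lemma differentiableAt_radialField {v : ℝ → ℝ} {x : E} (hx : x ≠ 0)
    (hv : DifferentiableAt ℝ v ‖x‖) : DifferentiableAt ℝ (radialField v) x := by
  have hnorm : DifferentiableAt ℝ (‖·‖) x := (contDiffAt_norm ℝ hx).differentiableAt one_ne_zero
  exact (hv.comp x hnorm).smul ((hnorm.inv (norm_ne_zero_iff.mpr hx)).smul differentiableAt_id)

lemma fderiv_radialField_apply_unit {v : ℝ → ℝ} {x : E} (hx : x ≠ 0)
    (hv : DifferentiableAt ℝ v ‖x‖) :
    fderiv ℝ (radialField v) x (‖x‖⁻¹ • x) = deriv v ‖x‖ • (‖x‖⁻¹ • x) := by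
  set r := ‖x‖
  set e := r⁻¹ • x
  have hr : 0 < r := norm_pos_iff.mpr hx
  have he : ‖e‖ = 1 := norm_smul_inv_norm hx
  have hray : (fun s : ℝ => radialField v (x + s • e)) =ᶠ[𝓝 0] fun s => v (r + s) • e := by
    filter_upwards [Ioi_mem_nhds (neg_lt_zero.mpr hr)] with s hs
    rw [← radialField_smul_of_norm_eq_one v he (by linarith [Set.mem_Ioi.mp hs]), add_smul,
      smul_inv_smul₀ hr.ne']
  have hderiv : HasDerivAt (fun s => v (r + s) • e) (deriv v r • e) 0 :=
    (HasDerivAt.comp_const_add r 0 (by simpa using hv.hasDerivAt)).smul_const e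
  rw [← (differentiableAt_radialField hx hv).lineDeriv_eq_fderiv, lineDeriv, hray.deriv_eq,
    hderiv.deriv]

/-- Convective term of a radial field: for `F x = v ‖x‖ • (‖x‖⁻¹ • x)` at a nonzero point `x`
with `r = ‖x‖`, if `v` is differentiable at `r` then
`(fderiv ℝ F x) (F x) = (v r * v' r) • (‖x‖⁻¹ • x)`, i.e. `(v·∇)v = v (∂v/∂r) e_r`. -/
theorem radial_convective_term (v : ℝ → ℝ) (x : EuclideanSpace ℝ (Fin 3)) (hx : x ≠ 0)
    (hv : DifferentiableAt ℝ v ‖x‖) :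
    (fderiv ℝ (fun y : EuclideanSpace ℝ (Fin 3) => v ‖y‖ • (‖y‖⁻¹ • y)) x)
        (v ‖x‖ • (‖x‖⁻¹ • x))
      = (v ‖x‖ * deriv v ‖x‖) • (‖x‖⁻¹ • x) := by
  change fderiv ℝ (radialField v) x (v ‖x‖ • (‖x‖⁻¹ • x)) = _
  rw [map_smul, fderiv_radialField_apply_unit hx hv, smul_smul]
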